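/- The family d_t of Lie algebra structures on ℂ³ with brackets [w₁,w₃] = w₁ + t w₂, [w₂,w₃] = w₂ is a jump deformation: d₀ = d₂ and for every t ≠ 0, d_t is isomorphic to d₂(1:1) (with [w₁,w₃] = w₁ + w₂, [w₂,w₃] = w₂), which is not isomorphic to d₂. -/

import Mathlib

/- STATEMENT 13: The family `d_t` on `ℂ³` with `[w₁,w₃] = w₁ + t w₂`, `[w₂,w₃] = w₂`
is a jump deformation: `d₀ = d₂` (with `[w₁,w₃] = w₁`, `[w₂,w₃] = w₂`), and for every
`t ≠ 0`, `d_t` is isomorphic to `d₂(1:1)` (with `[w₁,w₃] = w₁ + w₂`, `[w₂,w₃] = w₂`),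
which is not isomorphic to `d₂`. -/

/-- The deformed bracket `d_t`: `[w₁,w₃] = w₁ + t w₂`, `[w₂,w₃] = w₂`. -/
def dt (t : ℂ) (x y : Fin 3 → ℂ) : Fin 3 → ℂ :=
  ![x 0 * y 2 - x 2 * y 0,
    t * (x 0 * y 2 - x 2 * y 0) + (x 1 * y 2 - x 2 * y 1),
    0]

/-- The bracket of `d₂`: `[w₁,w₃] = w₁`, `[w₂,w₃] = w₂`. -/
def d2diag (x y : Fin 3 → ℂ) : Fin 3 → ℂ :=
  ![x 0 * y 2 - x 2 * y 0, x 1 * y 2 - x 2 * y 1, 0]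

/-- The bracket of `d₂(1:1)`: `[w₁,w₃] = w₁ + w₂`, `[w₂,w₃] = w₂`. -/
def d211 (x y : Fin 3 → ℂ) : Fin 3 → ℂ :=
  ![x 0 * y 2 - x 2 * y 0,
    (x 0 * y 2 - x 2 * y 0) + (x 1 * y 2 - x 2 * y 1),
    0]

/-!
For `t ≠ 0`, rescaling `w₁` by `t` absorbs the parameter: `diag(t, 1, 1)` carries `d_t` onto
`d₂(1:1)`.

`d₂` and `d₂(1:1)` are told apart by how `ad` acts on brackets: in `d₂` every bracket
`u = [x, y]` satisfies `[u, z] = c u` with `c` the `w₃`-coordinate of `z`, a property inherited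
by anything embedding into `d₂`. In `d₂(1:1)` it fails, since `ad w₃` sends
`[w₁, w₃] = w₁ + w₂` to `w₁ + 2 w₂`.
-/

def BracketsAreAdEigenvectors {K V : Type*} [Semiring K] [AddCommMonoid V] [Module K V]
    (μ : V → V → V) : Prop :=
  ∀ x y z, ∃ c : K, μ (μ x y) z = c • μ x y

theorem BracketsAreAdEigenvectors.of_injective {K V W : Type*} [Semiring K]
    [AddCommMonoid V] [Module K V] [AddCommMonoid W] [Module K W]
    {μ : V → V → V} {ν : W → W → W} {g : V →ₗ[K] W} (hg : Function.Injective g)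
    (hgμν : ∀ x y, g (μ x y) = ν (g x) (g y)) (hν : BracketsAreAdEigenvectors (K := K) ν) :
    BracketsAreAdEigenvectors (K := K) μ := by
  intro x y z
  obtain ⟨c, hc⟩ := hν (g x) (g y) (g z)
  refine ⟨c, hg ?_⟩
  rw [hgμν, hgμν, map_smul, hgμν, hc]

theorem dt_zero : dt 0 = d2diag := by
  funext x y i
  fin_cases i <;> simp [dt, d2diag]

theorem d2diag_d2diag (x y z : Fin 3 → ℂ) :
    d2diag (d2diag x y) z = z 2 • d2diag x y := by
  funext i
  fin_cases i <;>
    simp only [d2diag, Fin.zero_eta, Fin.mk_one, Fin.reduceFinMk, Matrix.cons_val_zero,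
      Matrix.cons_val_one, Matrix.cons_val, Pi.smul_apply, smul_eq_mul] <;> ring

theorem bracketsAreAdEigenvectors_d2diag : BracketsAreAdEigenvectors (K := ℂ) d2diag :=
  fun x y z => ⟨z 2, d2diag_d2diag x y z⟩

theorem not_bracketsAreAdEigenvectors_d211 : ¬ BracketsAreAdEigenvectors (K := ℂ) d211 := by
  intro h
  obtain ⟨c, hc⟩ := h ![1, 0, 0] ![0, 0, 1] ![0, 0, 1]
  have h₀ : 1 = c := by simpa [d211] using congrFun hc 0
  have h₁ : 2 = c := by simpa [d211, one_add_one_eq_two] using congrFun hc 1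
  norm_num [← h₀] at h₁

noncomputable def scaleFirst {t : ℂ} (ht : t ≠ 0) : (Fin 3 → ℂ) ≃ₗ[ℂ] (Fin 3 → ℂ) :=
  LinearEquiv.piCongrRight fun i => LinearEquiv.smulOfUnit (![Units.mk0 t ht, 1, 1] i)

theorem scaleFirst_apply {t : ℂ} (ht : t ≠ 0) (x : Fin 3 → ℂ) :
    scaleFirst ht x = ![t * x 0, x 1, x 2] := by
  funext i
  fin_cases i <;> simp [scaleFirst, LinearEquiv.smulOfUnit, Units.smul_def]

theorem scaleFirst_dt {t : ℂ} (ht : t ≠ 0) (x y : Fin 3 → ℂ) :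
    scaleFirst ht (dt t x y) = d211 (scaleFirst ht x) (scaleFirst ht y) := by
  funext i
  fin_cases i <;>
    simp only [dt, d211, scaleFirst_apply, Fin.zero_eta, Fin.mk_one, Fin.reduceFinMk,
      Matrix.cons_val_zero, Matrix.cons_val_one, Matrix.cons_val] <;> ring

theorem dt_is_jump_deformation :
    (∀ x y, dt 0 x y = d2diag x y)
    ∧ (∀ t : ℂ, t ≠ 0 →
        ∃ g : (Fin 3 → ℂ) ≃ₗ[ℂ] (Fin 3 → ℂ),
          ∀ x y, g (dt t x y) = d211 (g x) (g y))
    ∧ ¬ ∃ g : (Fin 3 → ℂ) ≃ₗ[ℂ] (Fin 3 → ℂ),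
        ∀ x y, g (d211 x y) = d2diag (g x) (g y) := by
  refine ⟨fun x y => by rw [dt_zero], fun t ht => ⟨scaleFirst ht, scaleFirst_dt ht⟩, ?_⟩
  rintro ⟨g, hg⟩
  exact not_bracketsAreAdEigenvectors_d211 <|
    .of_injective (g := g.toLinearMap) g.injective hg bracketsAreAdEigenvectors_d2diag
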